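/- arXiv:1504.04124 — 2 statements merged into one kernel-verified Lean document; each statement's English description precedes it below -/
import Mathlib

section
/- Let J_α(v) := ∫_{ℝ³} |v−w|^α μ(w) dw where μ is the standard Gaussian on ℝ³. If −3 < α < 0, then there exists a constant C > 0 such that J_α(v) ≤ C ⟨v⟩^α for all v ∈ ℝ³, where ⟨v⟩ = (1+|v|²)^{1/2}. -/
/-!
Split the integral at the ball of radius `r = (1 + |v|) / 2` around `v`. Off the ball
`|v - w|^α ≤ r^α` and `μ` has mass one. On the ball `|w| > r - 1`, so Gaussian decay gives
`μ(w) ≤ C r⁻³`, while `∫_{B(v,r)} |v - w|^α dw = r^(3+α) ∫_{B(0,1)} |x|^α` is finite since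
`α > -3`. Both pieces are `O(r^α)`, and `r ≥ ⟨v⟩ / 2`.
-/

open MeasureTheory Real

noncomputable section

abbrev R3 := EuclideanSpace ℝ (Fin 3)

/-- The standard Maxwellian (Gaussian) on ℝ³. -/
def mu (w : R3) : ℝ := (2 * π) ^ (-(3:ℝ)/2) * Real.exp (-‖w‖ ^ 2 / 2)

/-- The Japanese bracket ⟨v⟩ = (1 + |v|²)^{1/2}. -/
def jb (v : R3) : ℝ := Real.sqrt (1 + ‖v‖ ^ 2)

open Metric Set Module

theorem preimage_sub_left_ball {E : Type*} [SeminormedAddCommGroup E] (v : E) (r : ℝ) :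
    (v - ·) ⁻¹' ball 0 r = ball v r := by
  ext w; simp [dist_eq_norm, norm_sub_rev]

section

variable {E : Type*} [NormedAddCommGroup E] [NormedSpace ℝ E] [FiniteDimensional ℝ E]
  [MeasurableSpace E] [BorelSpace E] (μ : Measure E) [μ.IsAddHaarMeasure]

theorem integrableOn_norm_rpow_ball [Nontrivial E] {α : ℝ} (hα : -(finrank ℝ E : ℝ) < α)
    (r : ℝ) : IntegrableOn (fun x : E => ‖x‖ ^ α) (ball 0 r) μ := by
  rcases le_or_gt r 0 with hr | hr
  · simp [ball_eq_empty.2 hr]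
  rw [integrableOn_fun_norm_addHaar μ (f := fun y => y ^ α)]
  have hd : 1 ≤ finrank ℝ E := finrank_pos
  refine ((intervalIntegral.integrableOn_Ioo_rpow_iff (s := (finrank ℝ E - 1 : ℝ) + α) hr).2
    (by linarith)).congr_fun (fun y hy => ?_) measurableSet_Ioo
  simp only [smul_eq_mul, rpow_add hy.1, ← rpow_natCast, Nat.cast_sub hd, Nat.cast_one]

theorem setIntegral_norm_rpow_ball (α : ℝ) {r : ℝ} (hr : 0 < r) :
    ∫ x in ball (0 : E) r, ‖x‖ ^ α ∂μ
      = r ^ ((finrank ℝ E : ℝ) + α) * ∫ x in ball (0 : E) 1, ‖x‖ ^ α ∂μ := by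
  have h := μ.setIntegral_comp_smul_of_pos (fun x : E => ‖x‖ ^ α) (ball 0 1) hr
  rw [smul_unitBall_of_pos hr] at h
  have hscale : ∀ x : E, ‖r • x‖ ^ α = r ^ α * ‖x‖ ^ α := fun x => by
    rw [norm_smul, norm_of_nonneg hr.le, mul_rpow hr.le (norm_nonneg x)]
  simp only [hscale, integral_const_mul, smul_eq_mul] at h
  rw [rpow_add hr, rpow_natCast, mul_assoc, h, ← mul_assoc, mul_inv_cancel₀ (by positivity),
    one_mul]

theorem integrableOn_norm_sub_rpow_ball [Nontrivial E] {α : ℝ} (hα : -(finrank ℝ E : ℝ) < α)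
    (v : E) (r : ℝ) : IntegrableOn (fun w : E => ‖v - w‖ ^ α) (ball v r) μ := by
  rw [← preimage_sub_left_ball]
  exact ((Measure.measurePreserving_sub_left μ v).integrableOn_comp_preimage
    (Homeomorph.subLeft v).measurableEmbedding).2 (integrableOn_norm_rpow_ball μ hα r)

theorem setIntegral_norm_sub_rpow_ball (α : ℝ) (v : E) (r : ℝ) :
    ∫ w in ball v r, ‖v - w‖ ^ α ∂μ = ∫ x in ball (0 : E) r, ‖x‖ ^ α ∂μ := by
  rw [← preimage_sub_left_ball]
  exact (Measure.measurePreserving_sub_left μ v).setIntegral_preimage_emb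
    (Homeomorph.subLeft v).measurableEmbedding (fun x => ‖x‖ ^ α) _

theorem integral_norm_sub_rpow_mul_le [Nontrivial E] {α : ℝ} (hα : -(finrank ℝ E : ℝ) < α)
    (hα0 : α ≤ 0) {g : E → ℝ} (hg0 : 0 ≤ g) (hg : Integrable g μ) (v : E) {r M : ℝ}
    (hr : 0 < r) (hM : ∀ w ∈ ball v r, g w ≤ M) :
    ∫ w, ‖v - w‖ ^ α * g w ∂μ
      ≤ M * ∫ x in ball (0 : E) r, ‖x‖ ^ α ∂μ + r ^ α * ∫ w, g w ∂μ := by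
  have hnear : Integrable ((ball v r).indicator fun w => ‖v - w‖ ^ α) μ :=
    (integrable_indicator_iff measurableSet_ball).2 (integrableOn_norm_sub_rpow_ball μ hα v r)
  have hsplit : ∀ w, ‖v - w‖ ^ α * g w
      ≤ (ball v r).indicator (fun w => ‖v - w‖ ^ α) w * M + r ^ α * g w := by
    intro w
    by_cases hw : w ∈ ball v r
    · rw [indicator_of_mem hw]
      exact le_add_of_le_of_nonneg (mul_le_mul_of_nonneg_left (hM w hw) (by positivity))
        (mul_nonneg (by positivity) (hg0 w))
    · have hfar : r ≤ ‖v - w‖ := by rwa [mem_ball', dist_eq_norm, not_lt] at hw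
      rw [indicator_of_notMem hw, zero_mul, zero_add]
      exact mul_le_mul_of_nonneg_right (rpow_le_rpow_of_nonpos hr hfar hα0) (hg0 w)
  calc ∫ w, ‖v - w‖ ^ α * g w ∂μ
      ≤ ∫ w, ((ball v r).indicator (fun w => ‖v - w‖ ^ α) w * M + r ^ α * g w) ∂μ :=
        integral_mono_of_nonneg (ae_of_all _ fun w => mul_nonneg (by positivity) (hg0 w))
          ((hnear.mul_const M).add (hg.const_mul _)) (ae_of_all _ hsplit)
    _ = M * ∫ x in ball (0 : E) r, ‖x‖ ^ α ∂μ + r ^ α * ∫ w, g w ∂μ := by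
      rw [integral_add (hnear.mul_const M) (hg.const_mul _), integral_mul_const,
        integral_const_mul, integral_indicator measurableSet_ball,
        setIntegral_norm_sub_rpow_ball, mul_comm]

end

theorem one_add_pow_three_le_exp (x : ℝ) : (1 + x) ^ 3 ≤ 8 * exp (x ^ 2 / 2) := by
  have h := quadratic_le_exp_of_nonneg (by positivity : 0 ≤ x ^ 2 / 2)
  nlinarith [sq_nonneg (x - 1), sq_nonneg (x ^ 2 - 1), sq_nonneg x]

theorem mu_nonneg (w : R3) : 0 ≤ mu w := by
  unfold mu; positivity

theorem integral_mu : ∫ w, mu w = 1 := by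
  have h := GaussianFourier.integral_rexp_neg_mul_sq_norm (V := R3) (by norm_num : (0:ℝ) < 1 / 2)
  simp only [finrank_euclideanSpace_fin, neg_mul, one_div_mul_eq_div] at h
  rw [show (π / (1 / 2)) = 2 * π by ring] at h
  simp only [mu, integral_const_mul, neg_div, h]
  rw [rpow_neg (by positivity), Nat.cast_ofNat, inv_mul_cancel₀ (by positivity)]

theorem integrable_mu : Integrable mu :=
  .of_integral_ne_zero (by rw [integral_mu]; exact one_ne_zero)

theorem pow_three_mul_mu_le {s : ℝ} {w : R3} (hs0 : 0 ≤ s) (hs : s ≤ 1 + ‖w‖) :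
    s ^ 3 * mu w ≤ 8 * (2 * π) ^ (-(3:ℝ)/2) := by
  have hexp : exp (-‖w‖ ^ 2 / 2) * exp (‖w‖ ^ 2 / 2) = 1 := by
    rw [← exp_add, neg_div, neg_add_cancel, exp_zero]
  calc s ^ 3 * mu w ≤ (1 + ‖w‖) ^ 3 * mu w := by
        gcongr
        exact mu_nonneg w
    _ ≤ 8 * exp (‖w‖ ^ 2 / 2) * mu w :=
        mul_le_mul_of_nonneg_right (one_add_pow_three_le_exp ‖w‖) (mu_nonneg w)
    _ = 8 * (2 * π) ^ (-(3:ℝ)/2) := by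
        rw [mu]; linear_combination 8 * (2 * π) ^ (-(3:ℝ)/2) * hexp

theorem half_one_add_norm_rpow_le {α : ℝ} (hα : α ≤ 0) (v : R3) :
    ((1 + ‖v‖) / 2) ^ α ≤ 2 ^ (-α) * jb v ^ α := by
  have hjb : 0 < jb v := sqrt_pos.2 (by positivity)
  rw [div_rpow (by positivity) zero_le_two, div_eq_mul_inv, ← rpow_neg zero_le_two, mul_comm]
  exact mul_le_mul_of_nonneg_left (rpow_le_rpow_of_nonpos hjb (sqrt_one_add_norm_sq_le v) hα)
    (by positivity)

theorem stmt2 (α : ℝ) (h1 : -3 < α) (h2 : α < 0) :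
    ∃ C : ℝ, 0 < C ∧ ∀ v : R3,
      (∫ w : R3, ‖v - w‖ ^ α * mu w) ≤ C * jb v ^ α := by
  set K : ℝ := (2 * π) ^ (-(3:ℝ)/2)
  set I : ℝ := ∫ x in ball (0 : R3) 1, ‖x‖ ^ α with hI_def
  have hI : 0 ≤ I := setIntegral_nonneg measurableSet_ball fun x _ => by positivity
  refine ⟨2 ^ (-α) * (8 * K * I + 1), by positivity, fun v => ?_⟩
  set r := (1 + ‖v‖) / 2 with hr_def
  have hr : 0 < r := by positivity
  have hmu : ∀ w ∈ ball v r, mu w ≤ 8 * K / r ^ 3 := fun w hw => by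
    have : ‖v - w‖ < r := by rwa [mem_ball', dist_eq_norm] at hw
    rw [le_div_iff₀' (by positivity)]
    exact pow_three_mul_mu_le hr.le (by linarith [norm_le_norm_add_norm_sub' v w])
  calc (∫ w : R3, ‖v - w‖ ^ α * mu w)
      ≤ 8 * K / r ^ 3 * (∫ x in ball (0 : R3) r, ‖x‖ ^ α) + r ^ α * ∫ w, mu w :=
        integral_norm_sub_rpow_mul_le volume (by simpa using h1) h2.le mu_nonneg integrable_mu v
          hr hmu
    _ = r ^ α * (8 * K * I + 1) := by
        rw [setIntegral_norm_rpow_ball (volume : Measure R3) α hr, integral_mu,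
          finrank_euclideanSpace_fin, rpow_add hr, rpow_natCast, ← hI_def]
        field_simp
    _ ≤ 2 ^ (-α) * jb v ^ α * (8 * K * I + 1) := by
        gcongr
        exact half_one_add_norm_rpow_le h2.le v
    _ = 2 ^ (-α) * (8 * K * I + 1) * jb v ^ α := by ring
end
end

section
/- Let γ ∈ [−2,−1) and b_j(z) = −2|z|^γ z_j. Then for any θ' > 3/2 there exists C > 0 such that for all v ∈ ℝ³ and all j: |(b_j * f)(v)| ≤ C ⟨v⟩^{γ+1} ‖⟨·⟩^{θ'} f‖_{L²(ℝ³)}, whenever the right-hand side is finite. -/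
open MeasureTheory Real

noncomputable section

open Set Metric

/-!
Since `|b_j(z)| ≤ 2 |z|^(γ+1)`, Cauchy–Schwarz against `⟨w⟩^θ' f(w)` reduces the estimate
to `∫ |v - w|^c ⟨w⟩^(-β) dw ≲ ⟨v⟩^c` with `c = 2(γ+1) ∈ [-2, 0)` and `β = 2θ' > 3`.
Split at `|v - w| = ⟨v⟩/2`. Inside, `⟨w⟩ ≥ ⟨v⟩/2` because `⟨·⟩` is 1-Lipschitz, and
`∫_{|u|<R} |u|^c du = R^(3+c) ∫_{|u|<1} |u|^c du` by scaling, which gives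
`⟨v⟩^(3+c-β) ≲ ⟨v⟩^c`. Outside, `|v - w|^c ≤ (⟨v⟩/2)^c` and `⟨w⟩^(-β)` is integrable.
-/

section PowersOfTheNorm

variable {E : Type*} [NormedAddCommGroup E] [NormedSpace ℝ E] [FiniteDimensional ℝ E]
  [MeasurableSpace E] [BorelSpace E] (μ : Measure E) [μ.IsAddHaarMeasure]

theorem integrableOn_ball_norm_rpow [Nontrivial E] {c : ℝ}
    (hc : -(Module.finrank ℝ E : ℝ) < c) (R : ℝ) :
    IntegrableOn (fun x : E => ‖x‖ ^ c) (ball 0 R) μ :=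
  integrableOn_ball_of_norm_le_rpow Module.finrank_pos (C := 1) (α := -c) (by linarith)
    (ae_of_all _ fun x => by simp [abs_of_nonneg (rpow_nonneg (norm_nonneg x) c)])
    (by fun_prop : Measurable fun x : E => ‖x‖ ^ c).aestronglyMeasurable

theorem setIntegral_ball_norm_rpow (c : ℝ) {R : ℝ} (hR : 0 < R) :
    ∫ x in ball (0 : E) R, ‖x‖ ^ c ∂μ =
      R ^ (Module.finrank ℝ E + c) * ∫ x in ball (0 : E) 1, ‖x‖ ^ c ∂μ := by
  have h := Measure.setIntegral_comp_smul_of_pos μ (fun x : E => ‖x‖ ^ c) (ball 0 1) hR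
  simp only [smul_unitBall_of_pos hR, norm_smul, Real.norm_of_nonneg hR.le,
    Real.mul_rpow hR.le (norm_nonneg _), integral_const_mul, smul_eq_mul] at h
  rw [rpow_add hR, rpow_natCast, mul_assoc, h, mul_inv_cancel_left₀ (by positivity)]

theorem integrable_indicator_ball_norm_rpow_comp_sub [Nontrivial E] {c : ℝ}
    (hc : -(Module.finrank ℝ E : ℝ) < c) (R : ℝ) (v : E) :
    Integrable (fun w => (ball (0 : E) R).indicator (fun u => ‖u‖ ^ c) (v - w)) μ :=
  ((integrable_indicator_iff measurableSet_ball).2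
    (integrableOn_ball_norm_rpow μ hc R)).comp_sub_left v

end PowersOfTheNorm

theorem norm_le_jb (v : R3) : ‖v‖ ≤ jb v :=
  Real.le_sqrt_of_sq_le (by linarith)

theorem one_le_jb (v : R3) : 1 ≤ jb v :=
  Real.le_sqrt_of_sq_le (by nlinarith [sq_nonneg ‖v‖])

theorem jb_pos (v : R3) : 0 < jb v :=
  one_pos.trans_le (one_le_jb v)

@[fun_prop]
theorem continuous_jb : Continuous jb := by
  unfold jb; fun_prop

theorem jb_le_jb_add_norm_sub (v w : R3) : jb v ≤ jb w + ‖v - w‖ := by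
  have hw : jb w ^ 2 = 1 + ‖w‖ ^ 2 := Real.sq_sqrt (by positivity)
  have htri : ‖v‖ ≤ ‖w‖ + ‖v - w‖ := norm_le_norm_add_norm_sub' v w
  rw [jb, Real.sqrt_le_left (by positivity [jb_pos w])]
  nlinarith [norm_le_jb w, norm_nonneg v, norm_nonneg (v - w)]

theorem integrable_jb_rpow_neg {β : ℝ} (hβ : 3 < β) :
    Integrable fun w : R3 => jb w ^ (-β) := by
  refine (integrable_rpow_neg_one_add_norm_sq (E := R3) (μ := volume) (r := β)
    (by simpa using hβ)).congr (ae_of_all _ fun w => ?_)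
  simp only [jb, Real.sqrt_eq_rpow, ← rpow_mul (by positivity : (0:ℝ) ≤ 1 + ‖w‖ ^ 2)]
  ring_nf

theorem half_jb_le_jb_of_norm_sub_lt {v w : R3} (h : ‖v - w‖ < jb v / 2) :
    jb v / 2 ≤ jb w := by
  linarith [jb_le_jb_add_norm_sub v w]

-- The two terms dominate `‖v - w‖^c ⟨w⟩^(-β)` on `‖v - w‖ < R` and on its complement.
def potentialMajorant (c β R : ℝ) (v w : R3) : ℝ :=
  R ^ (-β) * (ball (0 : R3) R).indicator (fun u => ‖u‖ ^ c) (v - w) + R ^ c * jb w ^ (-β)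

theorem norm_sub_rpow_mul_jb_rpow_le_potentialMajorant {c β : ℝ} (hc : c ≤ 0) (hβ : 0 ≤ β)
    (v w : R3) : ‖v - w‖ ^ c * jb w ^ (-β) ≤ potentialMajorant c β (jb v / 2) v w := by
  have hR : 0 < jb v / 2 := half_pos (jb_pos v)
  rw [potentialMajorant]
  by_cases hvw : ‖v - w‖ < jb v / 2
  · have hw : jb w ^ (-β) ≤ (jb v / 2) ^ (-β) :=
      rpow_le_rpow_of_nonpos hR (half_jb_le_jb_of_norm_sub_lt hvw) (neg_nonpos.2 hβ)
    rw [indicator_of_mem (mem_ball_zero_iff.2 hvw)]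
    have := mul_le_mul_of_nonneg_left hw (rpow_nonneg (norm_nonneg (v - w)) c)
    have : 0 ≤ (jb v / 2) ^ c * jb w ^ (-β) := by positivity [(jb_pos w).le]
    linarith
  · rw [indicator_of_notMem (by simpa using hvw), mul_zero, zero_add]
    exact mul_le_mul_of_nonneg_right (rpow_le_rpow_of_nonpos hR (not_lt.1 hvw) hc)
      (rpow_nonneg (jb_pos w).le _)

theorem integrable_potentialMajorant {c β : ℝ} (hc : -3 < c) (hβ : 3 < β) (R : ℝ) (v : R3) :
    Integrable (potentialMajorant c β R v) :=
  ((integrable_indicator_ball_norm_rpow_comp_sub volume (by simpa using hc) R v).const_mul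
    _).add ((integrable_jb_rpow_neg hβ).const_mul _)

theorem integral_potentialMajorant {c β R : ℝ} (hc : -3 < c) (hβ : 3 < β) (hR : 0 < R)
    (v : R3) :
    ∫ w, potentialMajorant c β R v w =
      R ^ c * (R ^ (3 - β) * (∫ u in ball (0 : R3) 1, ‖u‖ ^ c) + ∫ w, jb w ^ (-β)) := by
  have hexp : R ^ (-β) * R ^ (3 + c) = R ^ c * R ^ (3 - β) := by
    rw [← rpow_add hR, ← rpow_add hR]
    ring_nf
  simp only [potentialMajorant]
  rw [integral_add
      ((integrable_indicator_ball_norm_rpow_comp_sub volume (by simpa using hc) R v).const_mul _)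
      ((integrable_jb_rpow_neg hβ).const_mul _),
    integral_const_mul, integral_const_mul,
    integral_sub_left_eq_self (fun u => (ball (0 : R3) R).indicator (fun u => ‖u‖ ^ c) u),
    integral_indicator measurableSet_ball, setIntegral_ball_norm_rpow volume c hR]
  simp only [finrank_euclideanSpace_fin, Nat.cast_ofNat]
  linear_combination (∫ u in ball (0 : R3) 1, ‖u‖ ^ c) * hexp

theorem integral_norm_sub_rpow_mul_jb_rpow_le {c β : ℝ} (hc₁ : -3 < c) (hc₂ : c ≤ 0)
    (hβ : 3 < β) :
    ∃ K, 0 < K ∧ ∀ v : R3, Integrable (fun w => ‖v - w‖ ^ c * jb w ^ (-β)) ∧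
      ∫ w, ‖v - w‖ ^ c * jb w ^ (-β) ≤ K * jb v ^ c := by
  set I₁ := ∫ u in ball (0 : R3) 1, ‖u‖ ^ c
  set I₂ := ∫ w : R3, jb w ^ (-β)
  have hI₁ : 0 ≤ I₁ := setIntegral_nonneg measurableSet_ball fun u _ => by positivity
  have hI₂ : 0 ≤ I₂ := integral_nonneg fun w => rpow_nonneg (jb_pos w).le _
  refine ⟨max (2 ^ (-c) * (2 ^ (β - 3) * I₁ + I₂)) 1, by positivity, fun v => ?_⟩
  set R := jb v / 2 with hR_def
  have hR : 1 / 2 ≤ R := by linarith [one_le_jb v]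
  have hmaj := integrable_potentialMajorant hc₁ hβ R v
  have hle := norm_sub_rpow_mul_jb_rpow_le_potentialMajorant (β := β) hc₂ (by linarith) v
  have hint : Integrable fun w => ‖v - w‖ ^ c * jb w ^ (-β) :=
    hmaj.mono' (by fun_prop : Measurable fun w => ‖v - w‖ ^ c * jb w ^ (-β)).aestronglyMeasurable
      (ae_of_all _ fun w => by
        rw [norm_of_nonneg (by positivity [(jb_pos w).le])]
        exact hle w)
  refine ⟨hint, ?_⟩
  have hdecay : R ^ (3 - β) ≤ 2 ^ (β - 3) :=
    calc R ^ (3 - β) ≤ (1 / 2) ^ (3 - β) :=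
        rpow_le_rpow_of_nonpos (by norm_num) hR (by linarith)
      _ = 2 ^ (β - 3) := by
        rw [one_div, inv_rpow zero_le_two, ← rpow_neg zero_le_two, neg_sub]
  calc ∫ w, ‖v - w‖ ^ c * jb w ^ (-β)
      ≤ ∫ w, potentialMajorant c β R v w := integral_mono hint hmaj hle
    _ = R ^ c * (R ^ (3 - β) * I₁ + I₂) := integral_potentialMajorant hc₁ hβ (by linarith) v
    _ ≤ R ^ c * (2 ^ (β - 3) * I₁ + I₂) := by gcongr
    _ = 2 ^ (-c) * (2 ^ (β - 3) * I₁ + I₂) * jb v ^ c := by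
      rw [hR_def, div_rpow (jb_pos v).le zero_le_two, rpow_neg zero_le_two]
      ring
    _ ≤ _ := mul_le_mul_of_nonneg_right (le_max_left _ _) (rpow_nonneg (jb_pos v).le c)

section CauchySchwarz

variable {α : Type*} [MeasurableSpace α] {μ : Measure α}

theorem memLp_two_abs_of_integrable_sq {f : α → ℝ} (hf : Integrable (fun x => f x ^ 2) μ) :
    MemLp (fun x => |f x|) 2 μ := by
  have hmeas : AEStronglyMeasurable (fun x => |f x|) μ := by
    simpa [Real.sqrt_sq_eq_abs] using
      continuous_sqrt.comp_aestronglyMeasurable hf.aestronglyMeasurable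
  exact (memLp_two_iff_integrable_sq hmeas).2 (by simpa only [sq_abs] using hf)

theorem abs_integral_le_of_abs_le_mul_abs {g a b : α → ℝ} (hg : ∀ x, |g x| ≤ |a x| * |b x|)
    (ha : Integrable (fun x => a x ^ 2) μ) (hb : Integrable (fun x => b x ^ 2) μ) :
    |∫ x, g x ∂μ| ≤ (∫ x, a x ^ 2 ∂μ) ^ (1 / 2 : ℝ) * (∫ x, b x ^ 2 ∂μ) ^ (1 / 2 : ℝ) := by
  have ha₂ := memLp_two_abs_of_integrable_sq ha
  have hb₂ := memLp_two_abs_of_integrable_sq hb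
  have holder := integral_mul_le_Lp_mul_Lq_of_nonneg Real.HolderConjugate.two_two
    (ae_of_all μ fun x => abs_nonneg (a x)) (ae_of_all μ fun x => abs_nonneg (b x))
    (by simpa using ha₂) (by simpa using hb₂)
  simp only [rpow_two, sq_abs] at holder
  calc |∫ x, g x ∂μ| ≤ ∫ x, |g x| ∂μ := abs_integral_le_integral_abs
    _ ≤ ∫ x, |a x| * |b x| ∂μ :=
      integral_mono_of_nonneg (ae_of_all μ fun x => abs_nonneg (g x)) (ha₂.integrable_mul hb₂)
        (ae_of_all μ hg)
    _ ≤ _ := holder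

end CauchySchwarz

theorem abs_neg_two_mul_norm_rpow_mul_apply_le {ι : Type*} [Fintype ι] (γ : ℝ)
    (z : EuclideanSpace ℝ ι) (j : ι) : |-2 * ‖z‖ ^ γ * z j| ≤ 2 * ‖z‖ ^ (γ + 1) := by
  rcases eq_or_ne z 0 with rfl | hz
  · simp only [PiLp.zero_apply, mul_zero, abs_zero]
    positivity
  rw [rpow_add_one (norm_ne_zero_iff.2 hz), abs_mul, abs_mul, abs_neg, abs_two,
    abs_of_nonneg (rpow_nonneg (norm_nonneg z) γ), mul_assoc]
  gcongr
  exact PiLp.norm_apply_le z j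

theorem abs_neg_two_mul_norm_sub_rpow_mul_apply_mul_le (γ θ' : ℝ) (v w : R3) (j : Fin 3)
    (x : ℝ) : |(-2 * ‖v - w‖ ^ γ * (v - w) j) * x| ≤
      |2 * (‖v - w‖ ^ (γ + 1) * jb w ^ (-θ'))| * |jb w ^ θ' * x| := by
  have hjb : jb w ^ (-θ') * jb w ^ θ' = 1 := by
    rw [rpow_neg (jb_pos w).le, inv_mul_cancel₀ (rpow_pos_of_pos (jb_pos w) _).ne']
  calc |(-2 * ‖v - w‖ ^ γ * (v - w) j) * x|
      ≤ 2 * ‖v - w‖ ^ (γ + 1) * |x| := by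
        rw [abs_mul]
        gcongr
        exact abs_neg_two_mul_norm_rpow_mul_apply_le γ (v - w) j
    _ = |2 * (‖v - w‖ ^ (γ + 1) * jb w ^ (-θ'))| * |jb w ^ θ' * x| := by
      rw [abs_of_nonneg (mul_nonneg zero_le_two
          (mul_nonneg (rpow_nonneg (norm_nonneg _) _) (rpow_nonneg (jb_pos w).le _))),
        abs_mul, abs_of_pos (rpow_pos_of_pos (jb_pos w) _)]
      linear_combination (-2 * ‖v - w‖ ^ (γ + 1) * |x|) * hjb

theorem integral_sq_norm_sub_rpow_mul_jb_rpow_le {s t : ℝ} (hs₁ : -3 / 2 < s) (hs₂ : s ≤ 0)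
    (ht : 3 / 2 < t) :
    ∃ C, 0 < C ∧ ∀ v : R3, Integrable (fun w => (‖v - w‖ ^ s * jb w ^ (-t)) ^ 2) ∧
      (∫ w, (‖v - w‖ ^ s * jb w ^ (-t)) ^ 2) ^ (1 / 2 : ℝ) ≤ C * jb v ^ s := by
  obtain ⟨K, hK, hpotential⟩ := integral_norm_sub_rpow_mul_jb_rpow_le
    (c := 2 * s) (β := 2 * t) (by linarith) (by linarith) (by linarith)
  have hsq (v w : R3) :
      (‖v - w‖ ^ s * jb w ^ (-t)) ^ 2 = ‖v - w‖ ^ (2 * s) * jb w ^ (-(2 * t)) := by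
    rw [mul_pow, ← rpow_mul_natCast (norm_nonneg _), ← rpow_mul_natCast (jb_pos w).le]
    ring_nf
  refine ⟨√K, sqrt_pos.2 hK, fun v => ?_⟩
  obtain ⟨hint, hbound⟩ := hpotential v
  simp only [hsq]
  refine ⟨hint, ?_⟩
  calc (∫ w, ‖v - w‖ ^ (2 * s) * jb w ^ (-(2 * t))) ^ (1 / 2 : ℝ)
      ≤ (K * jb v ^ (2 * s)) ^ (1 / 2 : ℝ) :=
        rpow_le_rpow (integral_nonneg fun w =>
          mul_nonneg (rpow_nonneg (norm_nonneg _) _) (rpow_nonneg (jb_pos w).le _)) hbound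
          (by norm_num)
    _ = √K * jb v ^ s := by
      rw [mul_rpow hK.le (rpow_nonneg (jb_pos v).le _), ← sqrt_eq_rpow,
        ← rpow_mul (jb_pos v).le]
      ring_nf

theorem stmt9 (γ θ' : ℝ) (hγ1 : -2 ≤ γ) (hγ2 : γ < -1) (hθ : 3/2 < θ') :
    ∃ C : ℝ, 0 < C ∧ ∀ f : R3 → ℝ,
      Integrable (fun w : R3 => (jb w ^ θ' * f w) ^ 2) →
      ∀ (v : R3) (j : Fin 3),
        |∫ w : R3, (-2 * ‖v - w‖ ^ γ * (v - w) j) * f w|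
          ≤ C * jb v ^ (γ + 1) * (∫ w : R3, (jb w ^ θ' * f w) ^ 2) ^ ((1:ℝ)/2) := by
  obtain ⟨C, hC, hkernel⟩ := integral_sq_norm_sub_rpow_mul_jb_rpow_le
    (s := γ + 1) (t := θ') (by linarith) (by linarith) hθ
  refine ⟨2 * C, by positivity, fun f hf v j => ?_⟩
  obtain ⟨hint, hbound⟩ := hkernel v
  calc |∫ w, (-2 * ‖v - w‖ ^ γ * (v - w) j) * f w|
      ≤ (∫ w, (2 * (‖v - w‖ ^ (γ + 1) * jb w ^ (-θ'))) ^ 2) ^ (1 / 2 : ℝ) *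
          (∫ w, (jb w ^ θ' * f w) ^ 2) ^ (1 / 2 : ℝ) :=
        abs_integral_le_of_abs_le_mul_abs
          (fun w => abs_neg_two_mul_norm_sub_rpow_mul_apply_mul_le γ θ' v w j (f w))
          (by simpa only [mul_pow] using hint.const_mul (2 ^ 2)) hf
    _ = 2 * (∫ w, (‖v - w‖ ^ (γ + 1) * jb w ^ (-θ')) ^ 2) ^ (1 / 2 : ℝ) *
          (∫ w, (jb w ^ θ' * f w) ^ 2) ^ (1 / 2 : ℝ) := by
        simp only [mul_pow (2 : ℝ), integral_const_mul]
        rw [mul_rpow (by norm_num) (integral_nonneg fun w => sq_nonneg _), ← sqrt_eq_rpow,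
          sqrt_sq zero_le_two]
    _ ≤ 2 * C * jb v ^ (γ + 1) * (∫ w, (jb w ^ θ' * f w) ^ 2) ^ (1 / 2 : ℝ) := by
        rw [mul_assoc 2 C]
        gcongr
end
end
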